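/- arXiv:0907.5467 — 2 statements merged into one kernel-verified Lean document; each statement's English description precedes it below -/
import Mathlib

section
/- (Lower bound on the eigenvalue.) Let κ be a fragmentation kernel satisfying (K1), let τ, β be measurable and nonnegative, and let (λ,U) solve the truncated eigenproblem on (0,∞) (R = ∞) with inflow δ = 0 in integrated form, with U ≥ 0, ∫₀^∞ U = 1, βU ∈ L¹(0,∞), and τ(x)U(x) → 0 as x → ∞. Then λ = ∫₀^∞ β(y)U(y) dy ≥ 0, and τ(x)U(x) ≤ 2λ for a.e. x > 0; in particular λ ≥ (1/2)·ess sup_{x>0} τ(x)U(x). -/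
open MeasureTheory Set Filter
open scoped ENNReal NNReal

noncomputable section

/-- The kernel `κ(·,y)` is supported in `[0,y]`. -/
def KernelSupport (κ : ℝ → Measure ℝ) : Prop :=
  ∀ y : ℝ, 0 < y → κ y (Set.Icc 0 y)ᶜ = 0

/-- Measurability of `y ↦ ∫ ψ dκ(·,y)` for continuous `ψ`. -/
def KernelMeasurable (κ : ℝ → Measure ℝ) : Prop :=
  ∀ ψ : ℝ → ℝ, Continuous ψ → Measurable fun y => ∫ x, ψ x ∂(κ y)

/-- (K1): `κ(·,y)` is a probability measure. -/
def K1 (κ : ℝ → Measure ℝ) : Prop := ∀ y : ℝ, 0 < y → IsProbabilityMeasure (κ y)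

/-- (K2): `∫ x dκ(x,y) = y/2`. -/
def K2 (κ : ℝ → Measure ℝ) : Prop := ∀ y : ℝ, 0 < y → ∫ x, x ∂(κ y) = y / 2

/-- The class `P` of nonnegative measurable functions with polynomial upper and
lower control at infinity. -/
def MemP (f : ℝ → ℝ) : Prop :=
  Measurable f ∧ (∀ x : ℝ, 0 < x → 0 ≤ f x) ∧
  (∃ μ : ℝ, 0 ≤ μ ∧ ∃ M : ℝ, ∀ᶠ x in atTop, x ^ (-μ) * f x ≤ M) ∧
  (∃ ν : ℝ, 0 ≤ ν ∧ ∃ ε : ℝ, 0 < ε ∧ ∀ᶠ x in atTop, ε ≤ x ^ ν * f x)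

/-- `(lam, U)` solves the truncated eigenproblem, in integrated form with inflow
`δ`, on the interval `S` (`S = (0,R)`, or `S = (0,∞)` for `R = ∞`):
for a.e. `x ∈ S`,
`τ(x)U(x) + λ∫₀ˣU + ∫₀ˣβU = δ + 2∫_S β(y)U(y) κ([0,x],y) dy`. -/
def TruncEigen (τ β : ℝ → ℝ) (κ : ℝ → Measure ℝ) (δ : ℝ) (S : Set ℝ)
    (lam : ℝ) (U : ℝ → ℝ) : Prop :=
  IntegrableOn U S ∧ IntegrableOn (fun y => β y * U y) S ∧
  ∀ᵐ x ∂(volume.restrict S),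
    τ x * U x + lam * (∫ y in Set.Ioo 0 x, U y) + (∫ y in Set.Ioo 0 x, β y * U y)
      = δ + 2 * ∫ y in S, β y * U y * ((κ y) (Set.Icc 0 x)).toReal

open scoped Topology

/-
Integrating the eigenproblem up to `x` and letting `x → ∞`, the gain term
`2∫βU κ([0,x],·)` is squeezed between `2∫₀ˣβU` and `2∫βU` (a fragment of a particle of size
`y ≤ x` has size `≤ x`, and `κ` is a probability kernel), so the limit of the equation reads
`λ + ∫βU = 2∫βU`. For a fixed `x`, dropping the nonnegative terms `λ∫₀ˣU` and `∫₀ˣβU` and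
bounding the gain term by `2∫βU = 2λ` gives `τ(x)U(x) ≤ 2λ`.
-/

lemma aestronglyMeasurable_measure_toReal_of_isClosed {α Ω : Type*} [MeasurableSpace α]
    [PseudoEMetricSpace Ω] [MeasurableSpace Ω] [OpensMeasurableSpace Ω]
    {μ : Measure α} {κ : α → Measure Ω} (hfin : ∀ᵐ y ∂μ, IsFiniteMeasure (κ y))
    (hmeas : ∀ ψ : Ω → ℝ, Continuous ψ → Measurable fun y => ∫ x, ψ x ∂(κ y))
    {F : Set Ω} (hF : IsClosed F) :
    AEStronglyMeasurable (fun y => (κ y F).toReal) μ := by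
  have hδ : ∀ n : ℕ, (0 : ℝ) < 1 / (n + 1) := fun n => Nat.one_div_pos_of_nat
  refine aestronglyMeasurable_of_tendsto_ae atTop
    (f := fun n y => ∫ x, (thickenedIndicator (hδ n) F x : ℝ) ∂(κ y))
    (fun n => (hmeas _ (NNReal.continuous_coe.comp
      (thickenedIndicator (hδ n) F).continuous)).aestronglyMeasurable) ?_
  filter_upwards [hfin] with y hy
  exact tendsto_integral_thickenedIndicator_of_isClosed (κ y) hF hδ
    tendsto_one_div_add_atTop_nhds_zero_nat

lemma tendsto_setIntegral_Ioo_atTop {f : ℝ → ℝ} {a : ℝ} (hf : IntegrableOn f (Ioi a)) :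
    Tendsto (fun x => ∫ y in Ioo a x, f y) atTop (𝓝 (∫ y in Ioi a, f y)) := by
  refine (intervalIntegral_tendsto_integral_Ioi a hf tendsto_id).congr' ?_
  filter_upwards [eventually_ge_atTop a] with x hx
  rw [id, intervalIntegral.integral_of_le hx, integral_Ioc_eq_integral_Ioo]

instance ae_restrict_Ioi_inf_atTop_neBot (a : ℝ) :
    (ae (volume.restrict (Ioi a)) ⊓ atTop).NeBot := by
  refine inf_neBot_iff_frequently_left.mpr fun {p} hp => frequently_atTop.mpr fun b => ?_
  have hpos : volume.restrict (Ioi a) (Ioi (max a b)) ≠ 0 := by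
    simp [Measure.restrict_apply measurableSet_Ioi, Ioi_inter_Ioi]
  obtain ⟨x, hx, hpx⟩ := Measure.exists_mem_of_measure_ne_zero_of_ae hpos (ae_restrict_of_ae hp)
  exact ⟨x, (le_max_right a b).trans hx.le, hpx⟩

section FragmentationGain

variable {κ : ℝ → Measure ℝ} {g : ℝ → ℝ}

lemma measure_Icc_toReal_le_one (hK1 : K1 κ) {y : ℝ} (hy : 0 < y) (x : ℝ) :
    (κ y (Icc 0 x)).toReal ≤ 1 := by
  have := hK1 y hy
  exact measureReal_le_one

lemma measure_Icc_eq_one (hsupp : KernelSupport κ) (hK1 : K1 κ) {x y : ℝ} (hy : 0 < y)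
    (hyx : y ≤ x) : κ y (Icc 0 x) = 1 := by
  have := hK1 y hy
  exact (prob_compl_eq_zero_iff measurableSet_Icc).mp <|
    measure_mono_null (compl_subset_compl.mpr (Icc_subset_Icc le_rfl hyx)) (hsupp y hy)

lemma integrableOn_mul_measure_Icc_toReal (hmeas : KernelMeasurable κ) (hK1 : K1 κ)
    (hg : IntegrableOn g (Ioi 0)) (x : ℝ) :
    IntegrableOn (fun y => g y * (κ y (Icc 0 x)).toReal) (Ioi 0) := by
  have hfin : ∀ᵐ y ∂(volume.restrict (Ioi (0 : ℝ))), IsFiniteMeasure (κ y) := by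
    filter_upwards [ae_restrict_mem measurableSet_Ioi] with y hy
    have := hK1 y hy
    infer_instance
  refine hg.mul_bdd (aestronglyMeasurable_measure_toReal_of_isClosed hfin hmeas isClosed_Icc)
    (c := 1) ?_
  filter_upwards [ae_restrict_mem measurableSet_Ioi] with y hy
  rw [Real.norm_of_nonneg ENNReal.toReal_nonneg]
  exact measure_Icc_toReal_le_one hK1 hy x

lemma setIntegral_mul_measure_Icc_toReal_le (hmeas : KernelMeasurable κ) (hK1 : K1 κ)
    (hg0 : ∀ᵐ y ∂(volume.restrict (Ioi 0)), 0 ≤ g y)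
    (hg : IntegrableOn g (Ioi 0)) (x : ℝ) :
    ∫ y in Ioi 0, g y * (κ y (Icc 0 x)).toReal ≤ ∫ y in Ioi 0, g y := by
  refine integral_mono_ae (integrableOn_mul_measure_Icc_toReal hmeas hK1 hg x) hg ?_
  filter_upwards [hg0, ae_restrict_mem measurableSet_Ioi] with y hgy hy
  exact mul_le_of_le_one_right hgy (measure_Icc_toReal_le_one hK1 hy x)

lemma setIntegral_Ioo_le_setIntegral_mul_measure_Icc_toReal (hsupp : KernelSupport κ)
    (hmeas : KernelMeasurable κ) (hK1 : K1 κ) (hg0 : ∀ᵐ y ∂(volume.restrict (Ioi 0)), 0 ≤ g y)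
    (hg : IntegrableOn g (Ioi 0)) (x : ℝ) :
    ∫ y in Ioo 0 x, g y ≤ ∫ y in Ioi 0, g y * (κ y (Icc 0 x)).toReal := by
  calc ∫ y in Ioo 0 x, g y = ∫ y in Ioo 0 x, g y * (κ y (Icc 0 x)).toReal := by
        refine setIntegral_congr_fun measurableSet_Ioo fun y hy => ?_
        simp [measure_Icc_eq_one hsupp hK1 hy.1 hy.2.le]
    _ ≤ ∫ y in Ioi 0, g y * (κ y (Icc 0 x)).toReal := by
        refine setIntegral_mono_set (integrableOn_mul_measure_Icc_toReal hmeas hK1 hg x) ?_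
          (Ioo_subset_Ioi_self.eventuallyLE)
        filter_upwards [hg0] with y hgy using mul_nonneg hgy ENNReal.toReal_nonneg

end FragmentationGain

lemma TruncEigen.eigenvalue_eq_setIntegral {κ : ℝ → Measure ℝ} {τ β U : ℝ → ℝ} {lam : ℝ}
    (hsupp : KernelSupport κ) (hmeas : KernelMeasurable κ) (hK1 : K1 κ)
    (hβ0 : ∀ x, 0 ≤ β x) (hTE : TruncEigen τ β κ 0 (Ioi 0) lam U)
    (hU0 : ∀ᵐ x ∂(volume.restrict (Ioi 0)), 0 ≤ U x) (hUnorm : ∫ x in Ioi 0, U x = 1)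
    (hlim : Tendsto (fun x => τ x * U x) atTop (𝓝 0)) :
    lam = ∫ y in Ioi 0, β y * U y := by
  obtain ⟨hUint, hβUint, hEq⟩ := hTE
  have hβU0 : ∀ᵐ y ∂(volume.restrict (Ioi 0)), 0 ≤ β y * U y :=
    hU0.mono fun y hy => mul_nonneg (hβ0 y) hy
  -- `l` lets `x → ∞` through the points where the equation holds.
  let l := ae (volume.restrict (Ioi (0 : ℝ))) ⊓ atTop
  have hA := (tendsto_setIntegral_Ioo_atTop hUint).mono_left (inf_le_right : l ≤ atTop)
  rw [hUnorm] at hA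
  have hB := (tendsto_setIntegral_Ioo_atTop hβUint).mono_left (inf_le_right : l ≤ atTop)
  have hgain : Tendsto (fun x => ∫ y in Ioi 0, β y * U y * (κ y (Icc 0 x)).toReal) l
      (𝓝 (∫ y in Ioi 0, β y * U y)) :=
    tendsto_of_tendsto_of_tendsto_of_le_of_le hB tendsto_const_nhds
      (setIntegral_Ioo_le_setIntegral_mul_measure_Icc_toReal hsupp hmeas hK1 hβU0 hβUint)
      (setIntegral_mul_measure_Icc_toReal_le hmeas hK1 hβU0 hβUint)
  have hlhs := ((hlim.mono_left (inf_le_right : l ≤ atTop)).add (hA.const_mul lam)).add hB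
  have hlimits := tendsto_nhds_unique (hlhs.congr' (hEq.filter_mono inf_le_left))
    ((hgain.const_mul 2).const_add 0)
  linarith

theorem eigenvalue_lower_bound_general
    (κ : ℝ → Measure ℝ)
    (hκsupp : KernelSupport κ) (hκmeas : KernelMeasurable κ) (hK1 : K1 κ)
    (τ β : ℝ → ℝ) (hτ0 : ∀ x : ℝ, 0 ≤ τ x)
    (hβ0 : ∀ x : ℝ, 0 ≤ β x)
    (lam : ℝ) (U : ℝ → ℝ)
    (hTE : TruncEigen τ β κ 0 (Set.Ioi 0) lam U)
    (hU0 : ∀ᵐ x ∂(volume.restrict (Set.Ioi (0:ℝ))), 0 ≤ U x)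
    (hUnorm : ∫ x in Set.Ioi (0:ℝ), U x = 1)
    (hlim : Tendsto (fun x => τ x * U x) atTop (nhds 0)) :
    lam = ∫ y in Set.Ioi (0:ℝ), β y * U y ∧ 0 ≤ lam ∧
    (∀ᵐ x ∂(volume.restrict (Set.Ioi (0:ℝ))), τ x * U x ≤ 2 * lam) ∧
    (1 / 2) * essSup (fun x => τ x * U x) (volume.restrict (Set.Ioi (0:ℝ))) ≤ lam := by
  have hlam := hTE.eigenvalue_eq_setIntegral hκsupp hκmeas hK1 hβ0 hU0 hUnorm hlim
  obtain ⟨-, hβUint, hEq⟩ := hTE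
  have hβU0 : ∀ᵐ y ∂(volume.restrict (Ioi 0)), 0 ≤ β y * U y :=
    hU0.mono fun y hy => mul_nonneg (hβ0 y) hy
  have hlam0 : 0 ≤ lam := hlam ▸ integral_nonneg_of_ae hβU0
  have hbound : ∀ᵐ x ∂(volume.restrict (Ioi (0 : ℝ))), τ x * U x ≤ 2 * lam := by
    filter_upwards [hEq] with x hx
    have hA : 0 ≤ ∫ y in Ioo 0 x, U y :=
      integral_nonneg_of_ae (ae_restrict_of_ae_restrict_of_subset Ioo_subset_Ioi_self hU0)
    have hB : 0 ≤ ∫ y in Ioo 0 x, β y * U y :=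
      integral_nonneg_of_ae (ae_restrict_of_ae_restrict_of_subset Ioo_subset_Ioi_self hβU0)
    have hgain := setIntegral_mul_measure_Icc_toReal_le hκmeas hK1 hβU0 hβUint x
    linarith [mul_nonneg hlam0 hA]
  have : (ae (volume.restrict (Ioi (0 : ℝ)))).NeBot := neBot_of_le (inf_le_left : _ ⊓ atTop ≤ _)
  have hess := essSup_le_of_ae_le _ hbound <|
    isCoboundedUnder_le_of_eventually_le _ (hU0.mono fun x hx => mul_nonneg (hτ0 x) hx)
  exact ⟨hlam, hlam0, hbound, by linarith⟩

/-- **Lower bound on the eigenvalue.** If `(lam,U)` solves the eigenproblem on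
`(0,∞)` in integrated form with `δ = 0`, `U ≥ 0`, `∫U = 1` and `τU → 0` at
infinity, then `lam = ∫βU ≥ 0`, `τU ≤ 2lam` a.e., and
`lam ≥ (1/2) ess sup τU`. -/
theorem eigenvalue_lower_bound
    (κ : ℝ → Measure ℝ)
    (hκfin : ∀ y : ℝ, 0 < y → IsFiniteMeasure (κ y))
    (hκsupp : KernelSupport κ) (hκmeas : KernelMeasurable κ) (hK1 : K1 κ)
    (τ β : ℝ → ℝ) (hτmeas : Measurable τ) (hτ0 : ∀ x : ℝ, 0 ≤ τ x)
    (hβmeas : Measurable β) (hβ0 : ∀ x : ℝ, 0 ≤ β x)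
    (lam : ℝ) (U : ℝ → ℝ)
    (hTE : TruncEigen τ β κ 0 (Set.Ioi 0) lam U)
    (hU0 : ∀ᵐ x ∂(volume.restrict (Set.Ioi (0:ℝ))), 0 ≤ U x)
    (hUnorm : ∫ x in Set.Ioi (0:ℝ), U x = 1)
    (hlim : Tendsto (fun x => τ x * U x) atTop (nhds 0)) :
    lam = ∫ y in Set.Ioi (0:ℝ), β y * U y ∧ 0 ≤ lam ∧
    (∀ᵐ x ∂(volume.restrict (Set.Ioi (0:ℝ))), τ x * U x ≤ 2 * lam) ∧
    (1 / 2) * essSup (fun x => τ x * U x) (volume.restrict (Set.Ioi (0:ℝ))) ≤ lam :=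
  eigenvalue_lower_bound_general κ hκsupp hκmeas hK1 τ β hτ0 hβ0 lam U hTE hU0 hUnorm hlim
end
end

section
/- (The no-shattering condition implies the second-moment condition.) Let κ be a fragmentation kernel satisfying (K1) and (K2), and suppose there exist C > 0 and γ > 0 such that κ([0,x],y) ≤ C(x/y)^γ for all 0 < x ≤ y. Then for every η ∈ (0,1/2) and every y > 0: ∫ (x/y)² dκ(x,y) ≤ 1/2 − η²·(1 − Cη^γ − 1/(2(1−η))). In particular, there exists a constant c < 1/2 such that ∫ (x/y)² dκ(x,y) ≤ c for all y > 0, i.e. condition (K3) holds. -/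
open MeasureTheory Set Filter
open scoped ENNReal NNReal

noncomputable section

/-- (K3): the second moment of `κ` is uniformly less than `1/2`. -/
def K3 (κ : ℝ → Measure ℝ) : Prop :=
  ∃ c : ℝ, c < 1 / 2 ∧ ∀ y : ℝ, 0 < y → (∫ x, (x / y) ^ 2 ∂(κ y)) ≤ c

/-!
Write `t = x/y`. Since the mean of `t` is `1/2`, the second moment equals `1/2 - ∫ t(1-t)`, so it
suffices to bound `∫ t(1-t)` from below. On the middle region `η ≤ t ≤ 1-η` the integrand is at
least `η²`, and that region has mass at least `1 - Cη^γ - 1/(2(1-η))`: the no-shattering bound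
controls `t ≤ η`, and Markov's inequality with mean `1/2` controls `t > 1-η`. As `η → 0` this
mass tends to `1/2`, so some `η` makes the bound strictly smaller than `1/2`.
-/

open Topology

section

variable {μ : Measure ℝ} {y : ℝ}

lemma integrable_of_ae_mem_Icc [IsFiniteMeasure μ] {a b : ℝ} (hμ : ∀ᵐ x ∂μ, x ∈ Icc a b)
    {f : ℝ → ℝ} (hf : Continuous f) : Integrable f μ := by
  rw [← Measure.restrict_eq_self_of_ae_mem hμ]
  exact hf.integrableOn_Icc

lemma measureReal_Ioi_le_integral_div [IsFiniteMeasure μ] (hμ : ∀ᵐ x ∂μ, 0 ≤ x)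
    (hint : Integrable id μ) {t : ℝ} (ht : 0 < t) :
    μ.real (Ioi t) ≤ (∫ x, x ∂μ) / t := by
  rw [le_div_iff₀ ht, mul_comm]
  calc t * μ.real (Ioi t) ≤ t * μ.real {x | t ≤ x} :=
        mul_le_mul_of_nonneg_left (measureReal_mono Ioi_subset_Ici_self) ht.le
    _ ≤ ∫ x, x ∂μ := mul_meas_ge_le_integral_of_nonneg hμ hint t

lemma one_le_measureReal_Icc_add_Icc_add_Ioi [IsProbabilityMeasure μ]
    (hμ : ∀ᵐ x ∂μ, x ∈ Icc 0 y) (a b : ℝ) :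
    1 ≤ μ.real (Icc 0 a) + μ.real (Icc a b) + μ.real (Ioi b) := by
  have hcover : Icc 0 y ⊆ Icc 0 a ∪ Icc a b ∪ Ioi b := by
    rintro x ⟨hx0, -⟩
    rcases le_or_gt x a with hxa | hax
    · exact Or.inl (Or.inl ⟨hx0, hxa⟩)
    rcases le_or_gt x b with hxb | hbx
    · exact Or.inl (Or.inr ⟨hax.le, hxb⟩)
    · exact Or.inr hbx
  calc 1 = μ.real (Icc 0 y) := by
        rw [measureReal_congr (s := Icc 0 y) (eventuallyEq_univ.2 hμ), probReal_univ]
    _ ≤ μ.real (Icc 0 a ∪ Icc a b ∪ Ioi b) := measureReal_mono hcover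
    _ ≤ μ.real (Icc 0 a) + μ.real (Icc a b) + μ.real (Ioi b) :=
      (measureReal_union_le _ _).trans (by gcongr; exact measureReal_union_le _ _)

lemma sq_mul_measureReal_Icc_le_integral [IsFiniteMeasure μ] (hy : 0 < y)
    (hμ : ∀ᵐ x ∂μ, x ∈ Icc 0 y) {η : ℝ} (hη : 0 ≤ η) :
    η ^ 2 * μ.real (Icc (η * y) ((1 - η) * y)) ≤ ∫ x, x / y * (1 - x / y) ∂μ := by
  have hint : Integrable (fun x ↦ x / y * (1 - x / y)) μ :=
    integrable_of_ae_mem_Icc hμ (by fun_prop)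
  have hmiddle : ∀ x ∈ Icc (η * y) ((1 - η) * y), η ^ 2 ≤ x / y * (1 - x / y) := by
    rintro x ⟨hlo, hhi⟩
    have h₁ : η ≤ x / y := (le_div_iff₀ hy).2 hlo
    have h₂ : η ≤ 1 - x / y := by linarith [(div_le_iff₀ hy).2 hhi]
    rw [sq]
    exact mul_le_mul h₁ h₂ hη (hη.trans h₁)
  have hnonneg : 0 ≤ᵐ[μ] fun x ↦ x / y * (1 - x / y) := by
    filter_upwards [hμ] with x ⟨hx0, hxy⟩
    have : x / y ≤ 1 := (div_le_one hy).2 hxy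
    exact mul_nonneg (div_nonneg hx0 hy.le) (by linarith)
  calc η ^ 2 * μ.real (Icc (η * y) ((1 - η) * y))
      ≤ ∫ x in Icc (η * y) ((1 - η) * y), x / y * (1 - x / y) ∂μ :=
        setIntegral_ge_of_const_le_real measurableSet_Icc (measure_ne_top _ _) hmiddle
          hint.integrableOn
    _ ≤ ∫ x, x / y * (1 - x / y) ∂μ := setIntegral_le_integral hint hnonneg

theorem integral_sq_div_le_of_measureReal_Icc_le [IsProbabilityMeasure μ] (hy : 0 < y)
    (hμ : ∀ᵐ x ∂μ, x ∈ Icc 0 y) (hmean : ∫ x, x ∂μ = y / 2) {η ε : ℝ} (hη : 0 < η)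
    (hη₂ : η < 1 / 2) (hlow : μ.real (Icc 0 (η * y)) ≤ ε) :
    ∫ x, (x / y) ^ 2 ∂μ ≤ 1 / 2 - η ^ 2 * (1 - ε - 1 / (2 * (1 - η))) := by
  have hid : Integrable (fun x ↦ x) μ := integrable_of_ae_mem_Icc hμ continuous_id
  have hhigh : μ.real (Ioi ((1 - η) * y)) ≤ 1 / (2 * (1 - η)) := by
    have hpos : 0 < 1 - η := by linarith
    calc μ.real (Ioi ((1 - η) * y)) ≤ (∫ x, x ∂μ) / ((1 - η) * y) :=
          measureReal_Ioi_le_integral_div (hμ.mono fun x hx ↦ hx.1) hid (by positivity)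
      _ = 1 / (2 * (1 - η)) := by rw [hmean]; field_simp
  have hmiddle : 1 - ε - 1 / (2 * (1 - η)) ≤ μ.real (Icc (η * y) ((1 - η) * y)) := by
    linarith [one_le_measureReal_Icc_add_Icc_add_Ioi hμ (η * y) ((1 - η) * y)]
  have hsecond : ∫ x, (x / y) ^ 2 ∂μ = 1 / 2 - ∫ x, x / y * (1 - x / y) ∂μ := by
    calc ∫ x, (x / y) ^ 2 ∂μ = ∫ x, (x / y - x / y * (1 - x / y)) ∂μ := by
          congr 1; funext x; ring
      _ = 1 / 2 - ∫ x, x / y * (1 - x / y) ∂μ := by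
          rw [integral_sub (hid.div_const y) (integrable_of_ae_mem_Icc hμ (by fun_prop)),
            integral_div, hmean]
          field_simp
  have := mul_le_mul_of_nonneg_left hmiddle (sq_nonneg η)
  linarith [sq_mul_measureReal_Icc_le_integral hy hμ hη.le]

end

lemma exists_mem_Ioo_one_sub_mul_rpow_sub_pos (C : ℝ) {γ : ℝ} (hγ : 0 < γ) :
    ∃ η ∈ Ioo 0 (1 / 2), 0 < 1 - C * η ^ γ - 1 / (2 * (1 - η)) := by
  have hlim : Tendsto (fun η : ℝ ↦ 1 - C * η ^ γ - 1 / (2 * (1 - η))) (𝓝 0) (𝓝 (1 / 2)) := by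
    have hcont : ContinuousAt (fun η : ℝ ↦ 1 - C * η ^ γ - 1 / (2 * (1 - η))) 0 :=
      ((continuousAt_const.mul (Real.continuousAt_rpow_const 0 γ (.inr hγ.le))).const_sub
        _).sub (continuousAt_const.div (by fun_prop) (by norm_num))
    convert hcont.tendsto using 2
    norm_num [Real.zero_rpow hγ.ne']
  have hsmall : ∀ᶠ η in 𝓝[>] (0 : ℝ), η ∈ Ioo 0 (1 / 2) :=
    Ioo_mem_nhdsGT (by norm_num)
  exact (hsmall.and (nhdsWithin_le_nhds (hlim.eventually (lt_mem_nhds (by norm_num))))).exists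

theorem no_shattering_implies_K3_general
    (κ : ℝ → Measure ℝ)
    (hκsupp : KernelSupport κ)
    (hK1 : K1 κ) (hK2 : K2 κ)
    (C γ : ℝ) (hγ : 0 < γ)
    (hbound : ∀ x y : ℝ, 0 < x → x ≤ y →
      ((κ y) (Set.Icc 0 x)).toReal ≤ C * (x / y) ^ γ) :
    (∀ η : ℝ, 0 < η → η < 1 / 2 → ∀ y : ℝ, 0 < y →
      (∫ x, (x / y) ^ 2 ∂(κ y))
        ≤ 1 / 2 - η ^ 2 * (1 - C * η ^ γ - 1 / (2 * (1 - η)))) ∧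
    K3 κ := by
  have hsecond : ∀ η : ℝ, 0 < η → η < 1 / 2 → ∀ y : ℝ, 0 < y →
      (∫ x, (x / y) ^ 2 ∂(κ y)) ≤ 1 / 2 - η ^ 2 * (1 - C * η ^ γ - 1 / (2 * (1 - η))) := by
    intro η hη hη₂ y hy
    have := hK1 y hy
    refine integral_sq_div_le_of_measureReal_Icc_le hy (mem_ae_iff.2 (hκsupp y hy)) (hK2 y hy)
      hη hη₂ ?_
    have h := hbound (η * y) y (by positivity) (mul_le_of_le_one_left hy.le (by linarith))
    rwa [mul_div_cancel_right₀ _ hy.ne'] at h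
  obtain ⟨η, ⟨hη, hη₂⟩, hpos⟩ := exists_mem_Ioo_one_sub_mul_rpow_sub_pos C hγ
  exact ⟨hsecond, _, sub_lt_self _ (by positivity), hsecond η hη hη₂⟩

/-- **The no-shattering condition implies the second-moment condition.** Under
(K1), (K2) and `κ([0,x],y) ≤ C(x/y)^γ` with `γ > 0`, for every `η ∈ (0,1/2)` and
`y > 0` the second moment of `κ(·,y)` is at most
`1/2 − η²(1 − Cη^γ − 1/(2(1−η)))`; in particular (K3) holds. -/
theorem no_shattering_implies_K3
    (κ : ℝ → Measure ℝ)
    (hκfin : ∀ y : ℝ, 0 < y → IsFiniteMeasure (κ y))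
    (hκsupp : KernelSupport κ) (hκmeas : KernelMeasurable κ)
    (hK1 : K1 κ) (hK2 : K2 κ)
    (C γ : ℝ) (hC : 0 < C) (hγ : 0 < γ)
    (hbound : ∀ x y : ℝ, 0 < x → x ≤ y →
      ((κ y) (Set.Icc 0 x)).toReal ≤ C * (x / y) ^ γ) :
    (∀ η : ℝ, 0 < η → η < 1 / 2 → ∀ y : ℝ, 0 < y →
      (∫ x, (x / y) ^ 2 ∂(κ y))
        ≤ 1 / 2 - η ^ 2 * (1 - C * η ^ γ - 1 / (2 * (1 - η)))) ∧
    K3 κ :=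
  no_shattering_implies_K3_general κ hκsupp hK1 hK2 C γ hγ hbound
end
end
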